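/- Scaled Bellman operator is a Perov contraction: let X be a nonempty set, Z = {1,...,Z} finite with stochastic matrix P, Γ : X × Z → nonempty subsets of an action set A, g : X × Z × Z × A → X a transition function, β : Z × Z → [0,∞), and r̃ : graph(Γ) → ℝ a bounded scaled reward. Suppose there are constants γ̃(z,z') ≥ 0 such that for all (x,z) with a ∈ Γ(x,z) and all z', κ(g(x,z,z',a),z')/κ(x,z) ≤ γ̃(z,z')/β(z,z') (equivalently, γ̃ dominates β times the weight-ratio). Define B(z,z') = P(z,z')·γ̃(z,z') and assume ρ(B) < 1. Then the operator T̃ defined on the space of functions ṽ : X × Z → ℝ bounded in each z-slice by (T̃ṽ)(x,z) = sup_{a∈Γ(x,z)} { r̃(x,z,a) + Σ_{z'} P(z,z') β(z,z') (κ(g(x,z,z',a),z')/κ(x,z)) ṽ(g(x,z,z',a),z') } is a Perov contraction with coefficient matrix B, and hence has a unique fixed point. -/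

import Mathlib

/-!
The weights `β(z,z') κ(x',z') / κ(x,z)` lie in `[0, γ̃(z,z')]`, so on each slice `z` the objective
inside the supremum is bounded and, for two value functions `u, v`, differs by at most
`Σ_{z'} P(z,z') γ̃(z,z') d_{z'}(u,v)`. A supremum moves by at most the uniform distance of the
functions, which gives both the invariance of `V` and the Perov inequality.

For the fixed point, identify `V` with the complete space `(ℓ^∞(X))^Z`. Iterating the Perov
inequality gives `d(Tᵏu, Tᵏv) ≤ Bᵏ d(u,v)` entrywise, and by Gelfand's formula `ρ(B) < 1` forces
`‖Bᵏ‖_∞ < 1` for some `k`. Then `Tᵏ` is a contraction for the sup metric, so `T` has a unique fixed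
point by Banach's theorem.
-/

/-- Spectral radius of a real square matrix. -/
noncomputable def specRad {n : Type*} [Fintype n] [DecidableEq n]
    (B : Matrix n n ℝ) : ℝ :=
  sSup {r : ℝ | ∃ μ ∈ spectrum ℂ (B.map (Complex.ofReal ·)), r = ‖μ‖}

section Perov

open scoped Matrix

attribute [local instance] Matrix.linftyOpNormedRing Matrix.linftyOpNormedAlgebra

variable {Z : Type*} [Fintype Z] [DecidableEq Z]

theorem spectralRadius_map_ofReal_le_specRad (B : Matrix Z Z ℝ) :
    spectralRadius ℂ (B.map (Complex.ofReal ·)) ≤ ENNReal.ofReal (specRad B) := by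
  have hbdd : BddAbove {r : ℝ | ∃ μ ∈ spectrum ℂ (B.map (Complex.ofReal ·)), r = ‖μ‖} := by
    obtain ⟨C, hC⟩ :=
      (spectrum.isCompact (𝕜 := ℂ) (B.map (Complex.ofReal ·))).isBounded.exists_norm_le
    exact ⟨C, by rintro _ ⟨μ, hμ, rfl⟩; exact hC μ hμ⟩
  refine iSup₂_le fun μ hμ => ?_
  rw [← ENNReal.ofReal_coe_nnreal, coe_nnnorm]
  exact ENNReal.ofReal_le_ofReal (le_csSup hbdd ⟨μ, hμ, rfl⟩)

theorem Matrix.linfty_opNorm_map_ofReal (B : Matrix Z Z ℝ) :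
    ‖B.map (Complex.ofReal ·)‖ = ‖B‖ := by
  simp [Matrix.linfty_opNorm_def, Complex.nnnorm_real]

open Filter in
theorem exists_linfty_opNorm_pow_lt_one {B : Matrix Z Z ℝ} (hρ : specRad B < 1) :
    ∃ k, ‖B ^ k‖ < 1 := by
  have hρℂ : spectralRadius ℂ (B.map (Complex.ofReal ·)) < 1 :=
    (spectralRadius_map_ofReal_le_specRad B).trans_lt (ENNReal.ofReal_lt_one.mpr hρ)
  obtain ⟨k, hk, hk0⟩ :=
    (((spectrum.pow_norm_pow_one_div_tendsto_nhds_spectralRadius _).eventually_lt_const hρℂ).and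
      (eventually_gt_atTop 0)).exists
  refine ⟨k, ?_⟩
  have hpow : (B.map (Complex.ofReal ·)) ^ k = (B ^ k).map (Complex.ofReal ·) :=
    (B.map_pow Complex.ofRealHom k).symm
  rw [ENNReal.ofReal_lt_one, hpow, Matrix.linfty_opNorm_map_ofReal] at hk
  by_contra! h
  exact hk.not_ge (Real.one_le_rpow h (by positivity))

variable {E : Z → Type*} [∀ z, MetricSpace (E z)]
  {B : Matrix Z Z ℝ} {Φ : (∀ z, E z) → ∀ z, E z}

theorem dist_iterate_apply_le_mulVec (hB : ∀ z z', 0 ≤ B z z')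
    (hΦ : ∀ u v z, dist (Φ u z) (Φ v z) ≤ ∑ z', B z z' * dist (u z') (v z'))
    (k : ℕ) (u v : ∀ z, E z) (z : Z) :
    dist (Φ^[k] u z) (Φ^[k] v z) ≤ (B ^ k *ᵥ fun z' => dist (u z') (v z')) z := by
  induction k generalizing z with
  | zero => simp
  | succ k ih =>
    rw [Function.iterate_succ_apply', Function.iterate_succ_apply', pow_succ',
      ← Matrix.mulVec_mulVec]
    exact (hΦ _ _ z).trans
      (Finset.sum_le_sum fun z' _ => mul_le_mul_of_nonneg_left (ih z') (hB z z'))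

theorem dist_iterate_le_linfty_opNorm_pow_mul (hB : ∀ z z', 0 ≤ B z z')
    (hΦ : ∀ u v z, dist (Φ u z) (Φ v z) ≤ ∑ z', B z z' * dist (u z') (v z'))
    (k : ℕ) (u v : ∀ z, E z) :
    dist (Φ^[k] u) (Φ^[k] v) ≤ ‖B ^ k‖ * dist u v := by
  set d : Z → ℝ := fun z' => dist (u z') (v z')
  have hd : ‖d‖ ≤ dist u v := (pi_norm_le_iff_of_nonneg dist_nonneg).2 fun z =>
    (Real.norm_of_nonneg dist_nonneg).trans_le (dist_le_pi_dist u v z)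
  refine (dist_pi_le_iff (by positivity)).2 fun z => ?_
  calc dist (Φ^[k] u z) (Φ^[k] v z) ≤ (B ^ k *ᵥ d) z := dist_iterate_apply_le_mulVec hB hΦ k u v z
    _ ≤ ‖B ^ k *ᵥ d‖ := (le_abs_self _).trans (norm_le_pi_norm (B ^ k *ᵥ d) z)
    _ ≤ ‖B ^ k‖ * ‖d‖ := Matrix.linfty_opNorm_mulVec _ _
    _ ≤ ‖B ^ k‖ * dist u v := by gcongr

theorem existsUnique_fixedPoint_of_perov [∀ z, CompleteSpace (E z)] [∀ z, Nonempty (E z)]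
    (hB : ∀ z z', 0 ≤ B z z') (hρ : specRad B < 1)
    (hΦ : ∀ u v z, dist (Φ u z) (Φ v z) ≤ ∑ z', B z z' * dist (u z') (v z')) :
    ∃! w, Φ w = w := by
  obtain ⟨k, hk⟩ := exists_linfty_opNorm_pow_lt_one hρ
  have hcontr : ContractingWith ‖B ^ k‖₊ Φ^[k] :=
    ⟨hk, LipschitzWith.of_dist_le_mul (dist_iterate_le_linfty_opNorm_pow_mul hB hΦ k)⟩
  exact ⟨_, hcontr.isFixedPt_fixedPoint_iterate,
    fun w hw => hcontr.fixedPoint_unique (Function.IsFixedPt.iterate hw k)⟩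

end Perov

section Slices

open scoped ENNReal

variable {X Z : Type*}

def BddSlices (v : X → Z → ℝ) : Prop :=
  ∀ z, BddAbove (Set.range fun x => |v x z|)

theorem BddSlices.sub {u v : X → Z → ℝ} (hu : BddSlices u) (hv : BddSlices v) :
    BddSlices (u - v) := by
  intro z
  obtain ⟨Cu, hCu⟩ := hu z
  obtain ⟨Cv, hCv⟩ := hv z
  refine ⟨Cu + Cv, Set.forall_mem_range.2 fun x => ?_⟩
  exact (abs_sub _ _).trans (add_le_add (hCu ⟨x, rfl⟩) (hCv ⟨x, rfl⟩))

theorem dist_lp_infty_eq_iSup_abs (f f' : lp (fun _ : X => ℝ) ∞) :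
    dist f f' = ⨆ x, |f x - f' x| := by
  rw [dist_eq_norm, lp.norm_eq_ciSup]
  rfl

variable [Fintype Z] [DecidableEq Z]

theorem existsUnique_fixedPoint_of_slicewise_perov {T : (X → Z → ℝ) → X → Z → ℝ}
    (hT : ∀ v, BddSlices v → BddSlices (T v)) {B : Matrix Z Z ℝ} (hB : ∀ z z', 0 ≤ B z z')
    (hρ : specRad B < 1)
    (hTB : ∀ u v, BddSlices u → BddSlices v → ∀ z,
      ⨆ x, |T u x z - T v x z| ≤ ∑ z', B z z' * ⨆ x, |u x z' - v x z'|) :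
    ∃! v, BddSlices v ∧ T v = v := by
  let toFun (w : Z → lp (fun _ : X => ℝ) ∞) : X → Z → ℝ := fun x z => w z x
  have h_toFun (w : Z → lp (fun _ : X => ℝ) ∞) : BddSlices (toFun w) := fun z => by
    simpa only [Real.norm_eq_abs] using memℓp_infty_iff.1 (lp.memℓp (w z))
  let ofFun (v : X → Z → ℝ) (hv : BddSlices v) : Z → lp (fun _ : X => ℝ) ∞ := fun z =>
    ⟨fun x => v x z, memℓp_infty (by simpa only [Real.norm_eq_abs] using hv z)⟩
  let Φ w := ofFun (T (toFun w)) (hT _ (h_toFun w))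
  have hΦ u v z : dist (Φ u z) (Φ v z) ≤ ∑ z', B z z' * dist (u z') (v z') := by
    simpa only [dist_lp_infty_eq_iSup_abs] using hTB _ _ (h_toFun u) (h_toFun v) z
  obtain ⟨w, hw, huniq⟩ := existsUnique_fixedPoint_of_perov hB hρ hΦ
  refine ⟨toFun w, ⟨h_toFun w, congrArg toFun hw⟩, fun v ⟨hv, hTv⟩ => ?_⟩
  have hfix : Φ (ofFun v hv) = ofFun v hv := by
    funext z
    exact lp.ext (funext fun x => congrFun (congrFun hTv x) z)
  exact congrArg toFun (huniq _ hfix)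

end Slices

section SupImage

variable {α : Type*} {s : Set α} {f f' : α → ℝ}

theorem abs_sSup_image_le {M : ℝ} (hs : s.Nonempty) (hf : ∀ a ∈ s, |f a| ≤ M) :
    |sSup (f '' s)| ≤ M := by
  obtain ⟨a, ha⟩ := hs
  have hbdd : BddAbove (f '' s) :=
    ⟨M, Set.forall_mem_image.2 fun b hb => (abs_le.1 (hf b hb)).2⟩
  refine abs_le.2 ⟨(abs_le.1 (hf a ha)).1.trans (le_csSup hbdd (Set.mem_image_of_mem f ha)), ?_⟩
  exact csSup_le ⟨f a, Set.mem_image_of_mem f ha⟩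
    (Set.forall_mem_image.2 fun b hb => (abs_le.1 (hf b hb)).2)

theorem sSup_image_le_sSup_image_add {K : ℝ} (hs : s.Nonempty) (hf' : BddAbove (f' '' s))
    (h : ∀ a ∈ s, f a ≤ f' a + K) : sSup (f '' s) ≤ sSup (f' '' s) + K :=
  csSup_le (hs.image f) <| Set.forall_mem_image.2 fun a ha =>
    (h a ha).trans (add_le_add_left (le_csSup hf' (Set.mem_image_of_mem f' ha)) K)

theorem abs_sSup_image_sub_sSup_image_le {K : ℝ} (hs : s.Nonempty) (hf : BddAbove (f '' s))
    (hf' : BddAbove (f' '' s)) (h : ∀ a ∈ s, |f a - f' a| ≤ K) :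
    |sSup (f '' s) - sSup (f' '' s)| ≤ K := by
  refine abs_sub_le_iff.2 ⟨sub_le_iff_le_add'.2 ?_, sub_le_iff_le_add'.2 ?_⟩
  · exact sSup_image_le_sSup_image_add hs hf' fun a ha =>
      sub_le_iff_le_add'.1 (abs_sub_le_iff.1 (h a ha)).1
  · exact sSup_image_le_sSup_image_add hs hf fun a ha =>
      sub_le_iff_le_add'.1 (abs_sub_le_iff.1 (h a ha)).2

end SupImage

section ScaledBellman

variable {X Z A : Type*} [Fintype Z] {P β γ : Z → Z → ℝ} {κ : X → Z → ℝ} {Γ : X → Z → Set A}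
  {g : X → Z → Z → A → X} {r : X → Z → A → ℝ}

variable (P β κ g) in
noncomputable def scaledContinuation (v : X → Z → ℝ) (x : X) (z : Z) (a : A) : ℝ :=
  ∑ z', P z z' * β z z' * (κ (g x z z' a) z' / κ x z) * v (g x z z' a) z'

variable (P β κ Γ g r) in
noncomputable def scaledBellman (v : X → Z → ℝ) (x : X) (z : Z) : ℝ :=
  sSup ((fun a => r x z a + scaledContinuation P β κ g v x z a) '' Γ x z)

theorem scaledContinuation_sub (u v : X → Z → ℝ) (x : X) (z : Z) (a : A) :
    scaledContinuation P β κ g u x z a - scaledContinuation P β κ g v x z a =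
      scaledContinuation P β κ g (u - v) x z a := by
  simp only [scaledContinuation, ← Finset.sum_sub_distrib, mul_sub, Pi.sub_apply]

theorem abs_scaledContinuation_le (hP : ∀ z z', 0 ≤ P z z') (hβ : ∀ z z', 0 ≤ β z z')
    (hκ : ∀ x z, 0 < κ x z)
    (hdom : ∀ x z z', ∀ a ∈ Γ x z, β z z' * κ (g x z z' a) z' ≤ γ z z' * κ x z)
    {v : X → Z → ℝ} (hv : BddSlices v) {x : X} {z : Z} {a : A} (ha : a ∈ Γ x z) :
    |scaledContinuation P β κ g v x z a| ≤ ∑ z', P z z' * γ z z' * ⨆ x, |v x z'| := by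
  refine (Finset.abs_sum_le_sum_abs _ _).trans (Finset.sum_le_sum fun z' _ => ?_)
  have hw0 : 0 ≤ β z z' * (κ (g x z z' a) z' / κ x z) :=
    mul_nonneg (hβ z z') (div_nonneg (hκ _ _).le (hκ _ _).le)
  have hw : β z z' * (κ (g x z z' a) z' / κ x z) ≤ γ z z' := by
    rw [mul_div_assoc', div_le_iff₀ (hκ x z)]
    exact hdom x z z' a ha
  rw [mul_assoc (P z z'), abs_mul, abs_of_nonneg (mul_nonneg (hP z z') hw0)]
  exact mul_le_mul (mul_le_mul_of_nonneg_left hw (hP z z')) (le_ciSup (hv z') _) (abs_nonneg _)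
    (mul_nonneg (hP z z') (hw0.trans hw))

theorem exists_abs_reward_add_scaledContinuation_le (hP : ∀ z z', 0 ≤ P z z')
    (hβ : ∀ z z', 0 ≤ β z z') (hκ : ∀ x z, 0 < κ x z)
    (hdom : ∀ x z z', ∀ a ∈ Γ x z, β z z' * κ (g x z z' a) z' ≤ γ z z' * κ x z)
    (hr : ∀ z, ∃ M : ℝ, ∀ x, ∀ a ∈ Γ x z, |r x z a| ≤ M) {v : X → Z → ℝ} (hv : BddSlices v)
    (z : Z) : ∃ M : ℝ, ∀ x, ∀ a ∈ Γ x z, |r x z a + scaledContinuation P β κ g v x z a| ≤ M := by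
  obtain ⟨M, hM⟩ := hr z
  exact ⟨M + ∑ z', P z z' * γ z z' * ⨆ x, |v x z'|, fun x a ha => (abs_add_le _ _).trans
    (add_le_add (hM x a ha) (abs_scaledContinuation_le hP hβ hκ hdom hv ha))⟩

theorem bddSlices_scaledBellman (hP : ∀ z z', 0 ≤ P z z') (hβ : ∀ z z', 0 ≤ β z z')
    (hκ : ∀ x z, 0 < κ x z)
    (hdom : ∀ x z z', ∀ a ∈ Γ x z, β z z' * κ (g x z z' a) z' ≤ γ z z' * κ x z)
    (hΓ : ∀ x z, (Γ x z).Nonempty) (hr : ∀ z, ∃ M : ℝ, ∀ x, ∀ a ∈ Γ x z, |r x z a| ≤ M)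
    {v : X → Z → ℝ} (hv : BddSlices v) : BddSlices (scaledBellman P β κ Γ g r v) := fun z => by
  obtain ⟨M, hM⟩ := exists_abs_reward_add_scaledContinuation_le hP hβ hκ hdom hr hv z
  exact ⟨M, Set.forall_mem_range.2 fun x => abs_sSup_image_le (hΓ x z) (hM x)⟩

theorem iSup_abs_scaledBellman_sub_le (hP : ∀ z z', 0 ≤ P z z') (hβ : ∀ z z', 0 ≤ β z z')
    (hγ : ∀ z z', 0 ≤ γ z z') (hκ : ∀ x z, 0 < κ x z)
    (hdom : ∀ x z z', ∀ a ∈ Γ x z, β z z' * κ (g x z z' a) z' ≤ γ z z' * κ x z)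
    (hΓ : ∀ x z, (Γ x z).Nonempty) (hr : ∀ z, ∃ M : ℝ, ∀ x, ∀ a ∈ Γ x z, |r x z a| ≤ M)
    {u v : X → Z → ℝ} (hu : BddSlices u) (hv : BddSlices v) (z : Z) :
    ⨆ x, |scaledBellman P β κ Γ g r u x z - scaledBellman P β κ Γ g r v x z| ≤
      ∑ z', P z z' * γ z z' * ⨆ x, |u x z' - v x z'| := by
  have hbdd {w : X → Z → ℝ} (hw : BddSlices w) (x : X) :
      BddAbove ((fun a => r x z a + scaledContinuation P β κ g w x z a) '' Γ x z) := by
    obtain ⟨M, hM⟩ := exists_abs_reward_add_scaledContinuation_le hP hβ hκ hdom hr hw z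
    exact ⟨M, Set.forall_mem_image.2 fun a ha => le_of_abs_le (hM x a ha)⟩
  refine Real.iSup_le (fun x => abs_sSup_image_sub_sSup_image_le (hΓ x z) (hbdd hu x) (hbdd hv x)
    fun a ha => ?_) (Finset.sum_nonneg fun z' _ =>
      mul_nonneg (mul_nonneg (hP z z') (hγ z z')) (Real.iSup_nonneg fun x => abs_nonneg _))
  rw [add_sub_add_left_eq_sub, scaledContinuation_sub]
  exact abs_scaledContinuation_le hP hβ hκ hdom (hu.sub hv) ha

end ScaledBellman

theorem stmt_11_general {X Z A : Type*} [Fintype Z] [DecidableEq Z]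
    (P : Z → Z → ℝ) (hP0 : ∀ z z', 0 ≤ P z z')
    (Γ : X → Z → Set A) (hΓ : ∀ x z, (Γ x z).Nonempty)
    (g : X → Z → Z → A → X)
    (β : Z → Z → ℝ) (hβ : ∀ z z', 0 ≤ β z z')
    (κ : X → Z → ℝ) (hκ : ∀ x z, 0 < κ x z)
    (r : X → Z → A → ℝ)
    -- the scaled reward is bounded on the graph of Γ
    (hr : ∀ z, ∃ M : ℝ, ∀ x, ∀ a ∈ Γ x z, |r x z a| ≤ M)
    (γ : Z → Z → ℝ) (hγ : ∀ z z', 0 ≤ γ z z')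
    -- γ̃ dominates β times the weight ratio: β(z,z') κ(x',z') ≤ γ̃(z,z') κ(x,z)
    (hdom : ∀ x z z', ∀ a ∈ Γ x z,
      β z z' * κ (g x z z' a) z' ≤ γ z z' * κ x z)
    (hρ : specRad (Matrix.of fun z z' => P z z' * γ z z') < 1) :
    let Ttil : (X → Z → ℝ) → (X → Z → ℝ) := fun v x z =>
      sSup {y : ℝ | ∃ a ∈ Γ x z, y = r x z a +
        ∑ z', P z z' * β z z' * (κ (g x z z' a) z' / κ x z) * v (g x z z' a) z'}
    let V : Set (X → Z → ℝ) := {v | ∀ z, BddAbove (Set.range fun x => |v x z|)}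
    -- Ttil maps V into V
    (∀ v ∈ V, Ttil v ∈ V) ∧
    -- Perov contraction with coefficient matrix B(z,z') = P(z,z') γ̃(z,z')
    (∀ u ∈ V, ∀ v ∈ V, ∀ z,
      (⨆ x, |Ttil u x z - Ttil v x z|) ≤
        ∑ z', P z z' * γ z z' * ⨆ x, |u x z' - v x z'|) ∧
    -- hence a unique fixed point in V
    (∃! v : X → Z → ℝ, v ∈ V ∧ Ttil v = v) := by
  intro Ttil V
  have hT : Ttil = scaledBellman P β κ Γ g r := by
    funext v x z
    simp only [Ttil, scaledBellman, scaledContinuation, Set.image, eq_comm]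
  rw [hT]
  have hmaps (v) (hv : BddSlices v) := bddSlices_scaledBellman hP0 hβ hκ hdom hΓ hr hv
  have hcontr (u v) (hu : BddSlices u) (hv : BddSlices v) :=
    iSup_abs_scaledBellman_sub_le hP0 hβ hγ hκ hdom hΓ hr hu hv
  exact ⟨hmaps, fun u hu v hv => hcontr u v hu hv, existsUnique_fixedPoint_of_slicewise_perov
    hmaps (fun z z' => mul_nonneg (hP0 z z') (hγ z z')) hρ hcontr⟩

/-- The scaled Bellman operator of an additive Markov dynamic program with a
bounded scaled reward is a Perov contraction with coefficient matrix
`B(z,z') = P(z,z') γ̃(z,z')`, and hence has a unique fixed point in the space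
of functions bounded in each `z`-slice. -/
theorem stmt_11 {X Z A : Type*} [Nonempty X] [Fintype Z] [DecidableEq Z]
    [Nonempty Z]
    (P : Z → Z → ℝ) (hP0 : ∀ z z', 0 ≤ P z z') (hP1 : ∀ z, ∑ z', P z z' = 1)
    (Γ : X → Z → Set A) (hΓ : ∀ x z, (Γ x z).Nonempty)
    (g : X → Z → Z → A → X)
    (β : Z → Z → ℝ) (hβ : ∀ z z', 0 ≤ β z z')
    (κ : X → Z → ℝ) (hκ : ∀ x z, 0 < κ x z)
    (r : X → Z → A → ℝ)
    -- the scaled reward is bounded on the graph of Γ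
    (hr : ∀ z, ∃ M : ℝ, ∀ x, ∀ a ∈ Γ x z, |r x z a| ≤ M)
    (γ : Z → Z → ℝ) (hγ : ∀ z z', 0 ≤ γ z z')
    -- γ̃ dominates β times the weight ratio: β(z,z') κ(x',z') ≤ γ̃(z,z') κ(x,z)
    (hdom : ∀ x z z', ∀ a ∈ Γ x z,
      β z z' * κ (g x z z' a) z' ≤ γ z z' * κ x z)
    (hρ : specRad (Matrix.of fun z z' => P z z' * γ z z') < 1) :
    let Ttil : (X → Z → ℝ) → (X → Z → ℝ) := fun v x z =>
      sSup {y : ℝ | ∃ a ∈ Γ x z, y = r x z a +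
        ∑ z', P z z' * β z z' * (κ (g x z z' a) z' / κ x z) * v (g x z z' a) z'}
    let V : Set (X → Z → ℝ) := {v | ∀ z, BddAbove (Set.range fun x => |v x z|)}
    -- Ttil maps V into V
    (∀ v ∈ V, Ttil v ∈ V) ∧
    -- Perov contraction with coefficient matrix B(z,z') = P(z,z') γ̃(z,z')
    (∀ u ∈ V, ∀ v ∈ V, ∀ z,
      (⨆ x, |Ttil u x z - Ttil v x z|) ≤
        ∑ z', P z z' * γ z z' * ⨆ x, |u x z' - v x z'|) ∧
    -- hence a unique fixed point in V
    (∃! v : X → Z → ℝ, v ∈ V ∧ Ttil v = v) :=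
  stmt_11_general P hP0 Γ hΓ g β hβ κ hκ r hr γ hγ hdom hρ
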